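/- Minimal residual variance: among all X ∈ ℝ^{n×p} with XᵀX = 1 and XᵀZ = 0, the quantity σ²(X) = tr(QᵀCQ)/(n−d−p), where Q spans the orthogonal complement of col(Z) ⊕ col(X), is minimized by X̂ = U₂W_p, the top-p eigenvectors of C₂₂ lifted by U₂, and the minimal value is (1/(n−d−p)) Σ_{j=p+1}^{n−d} λ_j. -/

import Mathlib

/-!
Write `Q = U₂ V`, which is possible because `Qᵀ Z = 0` and `Z (ZᵀZ)⁻¹ Zᵀ + U₂ U₂ᵀ = 1`, and rotate
into the eigenbasis, `M = Wᵀ V`. Then `tr(QᵀCQ) = tr(Mᵀ diag(λ) M) = ∑ᵢ λᵢ sᵢ`, where the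
`sᵢ = (MMᵀ)ᵢᵢ` are the diagonal entries of an orthogonal projection of rank `e - p`: they lie in
`[0, 1]` and sum to `e - p`. For decreasing `λ` such a weighted sum is smallest when the weight sits
on the last `e - p` indices, which is exactly what the columns `p, …, e - 1` of `W`, lifted by `U₂`,
achieve.
-/

open Matrix

theorem Antitone.sum_filter_le_sum_mul {ι : Type*} [Fintype ι] [LinearOrder ι] {l : ι → ℝ}
    (hl : Antitone l) (a : ι) {s : ι → ℝ} (hs0 : ∀ i, 0 ≤ s i) (hs1 : ∀ i, s i ≤ 1)
    (hsum : ∑ i, s i = (Finset.univ.filter (a ≤ ·)).card) :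
    ∑ i ∈ Finset.univ.filter (a ≤ ·), l i ≤ ∑ i, l i * s i := by
  set t : ι → ℝ := fun i => if a ≤ i then 1 else 0
  have ht_sum : ∑ i, t i = (Finset.univ.filter (a ≤ ·)).card := by simp [t]
  have hlt : ∑ i ∈ Finset.univ.filter (a ≤ ·), l i = ∑ i, l i * t i := by
    simp [t, Finset.sum_filter]
  -- `l i - l a` and `s i - t i` are both `≤ 0` for `a ≤ i` and both `≥ 0` otherwise
  have hterm : ∀ i, 0 ≤ (l i - l a) * (s i - t i) := by
    intro i
    by_cases h : a ≤ i
    · have : t i = 1 := if_pos h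
      nlinarith [hl h, hs1 i]
    · have : t i = 0 := if_neg h
      nlinarith [hl (le_of_not_ge h), hs0 i]
  have hexpand : ∑ i, (l i - l a) * (s i - t i)
      = ∑ i, l i * s i - ∑ i, l i * t i - l a * (∑ i, s i - ∑ i, t i) := by
    simp only [sub_mul, mul_sub, Finset.sum_sub_distrib, Finset.mul_sum]
    ring
  have := Finset.sum_nonneg fun i (_ : i ∈ Finset.univ) => hterm i
  rw [hexpand, hsum, ht_sum, sub_self, mul_zero, sub_zero] at this
  linarith

namespace Matrix

variable {m n k o R : Type*} [Fintype m] [Fintype n]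

section CommSemiring

variable [CommSemiring R]

theorem transpose_mul_mul_mul (A : Matrix m n R) (B : Matrix n k R) (C : Matrix m m R)
    (B' : Matrix n o R) : (A * B)ᵀ * C * (A * B') = Bᵀ * (Aᵀ * C * A) * B' := by
  simp only [transpose_mul, Matrix.mul_assoc]

theorem transpose_mul_self_mul_eq_one [DecidableEq n] [Fintype k] [DecidableEq k]
    {A : Matrix m n R} {B : Matrix n k R} (hA : Aᵀ * A = 1) (hB : Bᵀ * B = 1) :
    (A * B)ᵀ * (A * B) = 1 := by
  rw [transpose_mul, Matrix.mul_assoc, ← Matrix.mul_assoc Aᵀ, hA, Matrix.one_mul, hB]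

omit [Fintype n] in
theorem transpose_submatrix_mul_mul_submatrix (W : Matrix m n R) (A : Matrix m m R)
    (f : k → n) (g : o → n) :
    (W.submatrix id f)ᵀ * A * W.submatrix id g = (Wᵀ * A * W).submatrix f g := by
  rw [transpose_submatrix, submatrix_mul _ _ f id g Function.bijective_id,
    submatrix_mul _ _ f id id Function.bijective_id, submatrix_id_id]

theorem eq_mul_transpose_mul_of_transpose_mul_eq_zero [Fintype k] [DecidableEq m]
    {Z : Matrix m k R} {G : Matrix k k R} {U : Matrix m n R} (hcomplete : Z * G * Zᵀ + U * Uᵀ = 1)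
    {Q : Matrix m o R} (hQZ : Qᵀ * Z = 0) : Q = U * (Uᵀ * Q) := by
  have hZQ : Zᵀ * Q = 0 := by simpa using congrArg transpose hQZ
  calc Q = (Z * G * Zᵀ + U * Uᵀ) * Q := by rw [hcomplete, Matrix.one_mul]
    _ = U * (Uᵀ * Q) := by simp [Matrix.add_mul, Matrix.mul_assoc, hZQ]

theorem trace_transpose_mul_diagonal_mul [DecidableEq m] (M : Matrix m n R) (l : m → R) :
    (Mᵀ * diagonal l * M).trace = ∑ i, l i * (M * Mᵀ) i i := by
  rw [trace_mul_comm, ← Matrix.mul_assoc]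
  simp [trace, mul_apply, diagonal_apply, mul_comm]

theorem transpose_mul_submatrix_mul_mul_submatrix [DecidableEq n] {U : Matrix m n R}
    {W : Matrix n n R} (A : Matrix m m R) (f : k → n) (g : o → n) :
    (U * W.submatrix id f)ᵀ * A * (U * W.submatrix id g) =
      (Wᵀ * (Uᵀ * A * U) * W).submatrix f g := by
  rw [transpose_mul_mul_mul, transpose_submatrix_mul_mul_submatrix]

theorem transpose_mul_self_mul_submatrix [DecidableEq n] {U : Matrix m n R} {W : Matrix n n R}
    (hU : Uᵀ * U = 1) (hW : Wᵀ * W = 1) (f : k → n) (g : o → n) :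
    (U * W.submatrix id f)ᵀ * (U * W.submatrix id g) = (1 : Matrix n n R).submatrix f g := by
  rw [transpose_mul, Matrix.mul_assoc, ← Matrix.mul_assoc Uᵀ, hU, Matrix.one_mul,
    ← Matrix.mul_one (W.submatrix id f)ᵀ, transpose_submatrix_mul_mul_submatrix, Matrix.mul_one,
    hW]

theorem transpose_mul_submatrix_mul_mul_submatrix_eq_diagonal [DecidableEq n] [DecidableEq k]
    {U : Matrix m n R} {W : Matrix n n R} {C : Matrix m m R} {l : n → R} (hW : Wᵀ * W = 1)
    (hspec : Uᵀ * C * U = W * diagonal l * Wᵀ) {f : k → n} (hf : Function.Injective f) :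
    (U * W.submatrix id f)ᵀ * C * (U * W.submatrix id f) = diagonal (l ∘ f) := by
  rw [transpose_mul_submatrix_mul_mul_submatrix, hspec, ← Matrix.mul_assoc, ← Matrix.mul_assoc,
    hW, Matrix.one_mul, Matrix.mul_assoc, hW, Matrix.mul_one, submatrix_diagonal _ _ hf]

end CommSemiring

omit [Fintype m] in
theorem diag_mul_transpose_nonneg (M : Matrix m n ℝ) (i : m) : 0 ≤ (M * Mᵀ) i i := by
  simpa [mul_apply] using Finset.sum_nonneg fun j (_ : j ∈ Finset.univ) => mul_self_nonneg (M i j)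

theorem diag_mul_transpose_le_one [DecidableEq n] {M : Matrix m n ℝ} (hM : Mᵀ * M = 1) (i : m) :
    (M * Mᵀ) i i ≤ 1 := by
  set P := M * Mᵀ
  have hP_symm : ∀ j, P j i = P i j := fun j => by
    simp only [P, mul_apply, transpose_apply, mul_comm]
  have hP_idem : P * P = P := by
    simp only [P, Matrix.mul_assoc, ← Matrix.mul_assoc Mᵀ, hM, Matrix.one_mul]
  have hdiag : P i i = ∑ j, P i j ^ 2 := by
    conv_lhs => rw [← hP_idem, mul_apply]
    simp only [hP_symm, sq]
  have hsq : P i i ^ 2 ≤ P i i := hdiag ▸ Finset.single_le_sum (f := fun j => P i j ^ 2)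
    (fun j _ => sq_nonneg _) (Finset.mem_univ i)
  nlinarith [diag_mul_transpose_nonneg M i]

omit [Fintype n] in
/-- Ky Fan's minimum principle, for a diagonal matrix. -/
theorem sum_filter_le_trace_transpose_mul_diagonal_mul [LinearOrder m] [Fintype k]
    [DecidableEq k] {l : m → ℝ} (hl : Antitone l) (a : m) {M : Matrix m k ℝ} (hM : Mᵀ * M = 1)
    (hk : Fintype.card k = (Finset.univ.filter (a ≤ ·)).card) :
    ∑ i ∈ Finset.univ.filter (a ≤ ·), l i ≤ (Mᵀ * diagonal l * M).trace := by
  rw [trace_transpose_mul_diagonal_mul]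
  refine hl.sum_filter_le_sum_mul a (diag_mul_transpose_nonneg M)
    (diag_mul_transpose_le_one hM) ?_
  rw [← hk, ← trace_one, ← hM, trace_mul_comm]
  rfl

theorem sum_filter_le_trace_transpose_mul_mul_of_transpose_mul_eq_zero [LinearOrder n]
    [DecidableEq m] [Fintype k] [DecidableEq k] [Fintype o] {Z : Matrix m o ℝ}
    {G : Matrix o o ℝ} {U : Matrix m n ℝ} (hcomplete : Z * G * Zᵀ + U * Uᵀ = 1)
    {C : Matrix m m ℝ} {W : Matrix n n ℝ} {l : n → ℝ} (hW : W * Wᵀ = 1)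
    (hspec : Uᵀ * C * U = W * diagonal l * Wᵀ) (hl : Antitone l) (a : n)
    {Q : Matrix m k ℝ} (hQQ : Qᵀ * Q = 1) (hQZ : Qᵀ * Z = 0)
    (hk : Fintype.card k = (Finset.univ.filter (a ≤ ·)).card) :
    ∑ i ∈ Finset.univ.filter (a ≤ ·), l i ≤ (Qᵀ * C * Q).trace := by
  have hQ := eq_mul_transpose_mul_of_transpose_mul_eq_zero hcomplete hQZ
  have hV : (Uᵀ * Q)ᵀ * (Uᵀ * Q) = 1 := by
    rw [transpose_mul, transpose_transpose, Matrix.mul_assoc, ← hQ, hQQ]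
  have hM : (Wᵀ * (Uᵀ * Q))ᵀ * (Wᵀ * (Uᵀ * Q)) = 1 :=
    transpose_mul_self_mul_eq_one (by rwa [transpose_transpose]) hV
  calc ∑ i ∈ Finset.univ.filter (a ≤ ·), l i
      ≤ ((Wᵀ * (Uᵀ * Q))ᵀ * diagonal l * (Wᵀ * (Uᵀ * Q))).trace :=
        sum_filter_le_trace_transpose_mul_diagonal_mul hl a hM hk
    _ = (Qᵀ * C * Q).trace := by
        rw [transpose_mul_mul_mul, transpose_transpose, ← hspec,
          ← transpose_mul_mul_mul U (Uᵀ * Q) C (Uᵀ * Q), ← hQ]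

end Matrix

def tailEmbedding {e p : ℕ} (h : p ≤ e) : Fin (e - p) ↪ Fin e :=
  ⟨fun j => ⟨p + j, by omega⟩, fun i j hij => by simpa [Fin.ext_iff] using hij⟩

@[simp]
theorem tailEmbedding_apply_val {e p : ℕ} (h : p ≤ e) (j : Fin (e - p)) :
    (tailEmbedding h j : ℕ) = p + j :=
  rfl

theorem filter_le_eq_map_tailEmbedding {e p : ℕ} (h : p ≤ e) :
    Finset.univ.filter (fun j : Fin e => p ≤ (j : ℕ)) = Finset.univ.map (tailEmbedding h) := by
  ext j
  simp only [Finset.mem_filter, Finset.mem_univ, true_and, Finset.mem_map]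
  refine ⟨fun hj => ⟨⟨j - p, by omega⟩, Fin.ext (by simp; omega)⟩, ?_⟩
  rintro ⟨i, rfl⟩
  simp

theorem one_submatrix_tailEmbedding_castLE {R : Type*} [Zero R] [One R] {e p : ℕ} (h : p ≤ e) :
    (1 : Matrix (Fin e) (Fin e) R).submatrix (tailEmbedding h) (Fin.castLE h) = 0 := by
  ext i j
  simp [Matrix.one_apply, Fin.ext_iff]
  omega

theorem stmt17_general {d e p : ℕ} (hpe : p < e)
    (Z : Matrix (Fin (d + e)) (Fin d) ℝ) (U₂ : Matrix (Fin (d + e)) (Fin e) ℝ)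
    (hU2 : U₂ᵀ * U₂ = 1) (hU2Z : U₂ᵀ * Z = 0)
    (hcomplete : Z * (Zᵀ * Z)⁻¹ * Zᵀ + U₂ * U₂ᵀ = 1)
    (C : Matrix (Fin (d + e)) (Fin (d + e)) ℝ)
    (l : Fin e → ℝ) (W : Matrix (Fin e) (Fin e) ℝ)
    (hlanti : Antitone l) (hW : Wᵀ * W = 1) (hW' : W * Wᵀ = 1)
    (hspec : U₂ᵀ * C * U₂ = W * Matrix.diagonal l * Wᵀ) :
    let σmin : ℝ := (∑ j ∈ Finset.univ.filter (fun j : Fin e => p ≤ (j : ℕ)), l j) / (e - p)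
    let Wp : Matrix (Fin e) (Fin p) ℝ := fun i j => W i ⟨j.1, lt_trans j.2 hpe⟩
    let Xh : Matrix (Fin (d + e)) (Fin p) ℝ := U₂ * Wp
    (∀ (X : Matrix (Fin (d + e)) (Fin p) ℝ) (Q : Matrix (Fin (d + e)) (Fin (e - p)) ℝ),
        Xᵀ * X = 1 → Xᵀ * Z = 0 →
        Qᵀ * Q = 1 → Qᵀ * Z = 0 → Qᵀ * X = 0 →
        σmin ≤ (Qᵀ * C * Q).trace / (e - p)) ∧
      ∃ Q : Matrix (Fin (d + e)) (Fin (e - p)) ℝ,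
        Qᵀ * Q = 1 ∧ Qᵀ * Z = 0 ∧ Qᵀ * Xh = 0 ∧
        (Qᵀ * C * Q).trace / (e - p) = σmin := by
  intro σmin Wp Xh
  have hfilter := filter_le_eq_map_tailEmbedding hpe.le
  have hcard :
      Fintype.card (Fin (e - p)) = (Finset.univ.filter ((⟨p, hpe⟩ : Fin e) ≤ ·)).card := by
    rw [Fintype.card_fin, Finset.filter_le_eq_Ici, Fin.card_Ici]
  refine ⟨fun X Q _ _ hQQ hQZ _ => div_le_div_of_nonneg_right ?_ (by norm_num [hpe.le]),
    U₂ * W.submatrix id (tailEmbedding hpe.le), ?_, ?_, ?_, ?_⟩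
  · exact sum_filter_le_trace_transpose_mul_mul_of_transpose_mul_eq_zero hcomplete hW' hspec
      hlanti ⟨p, hpe⟩ hQQ hQZ hcard
  · rw [transpose_mul_self_mul_submatrix hU2 hW, submatrix_one _ (tailEmbedding hpe.le).injective]
  · rw [transpose_mul, Matrix.mul_assoc, hU2Z, Matrix.mul_zero]
  · exact (transpose_mul_self_mul_submatrix hU2 hW _ (Fin.castLE hpe.le)).trans
      (one_submatrix_tailEmbedding_castLE hpe.le)
  · rw [transpose_mul_submatrix_mul_mul_submatrix_eq_diagonal hW hspec
      (tailEmbedding hpe.le).injective, trace_diagonal]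
    simp only [σmin, hfilter, Finset.sum_map]
    rfl

/-- Minimal residual variance: among all `X` with `XᵀX = 1`, `XᵀZ = 0`, the residual
variance `σ²(X) = tr(QᵀCQ)/(n−d−p)` (where `Q` is an orthonormal basis of the orthogonal
complement of `col(Z) ⊕ col(X)`) is minimized by `X̂ = U₂W_p`, with minimal value
`(1/(n−d−p)) ∑_{j=p+1}^{n−d} λ_j`. -/
theorem stmt17 {d e p : ℕ} (hpe : p < e)
    (Z : Matrix (Fin (d + e)) (Fin d) ℝ) (U₂ : Matrix (Fin (d + e)) (Fin e) ℝ)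
    (hZrank : IsUnit (Zᵀ * Z).det)
    (hU2 : U₂ᵀ * U₂ = 1) (hU2Z : U₂ᵀ * Z = 0)
    (hcomplete : Z * (Zᵀ * Z)⁻¹ * Zᵀ + U₂ * U₂ᵀ = 1)
    (C : Matrix (Fin (d + e)) (Fin (d + e)) ℝ) (hC : C.PosDef)
    (l : Fin e → ℝ) (W : Matrix (Fin e) (Fin e) ℝ)
    (hlanti : Antitone l) (hW : Wᵀ * W = 1) (hW' : W * Wᵀ = 1)
    (hspec : U₂ᵀ * C * U₂ = W * Matrix.diagonal l * Wᵀ) :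
    let σmin : ℝ := (∑ j ∈ Finset.univ.filter (fun j : Fin e => p ≤ (j : ℕ)), l j) / (e - p)
    let Wp : Matrix (Fin e) (Fin p) ℝ := fun i j => W i ⟨j.1, lt_trans j.2 hpe⟩
    let Xh : Matrix (Fin (d + e)) (Fin p) ℝ := U₂ * Wp
    (∀ (X : Matrix (Fin (d + e)) (Fin p) ℝ) (Q : Matrix (Fin (d + e)) (Fin (e - p)) ℝ),
        Xᵀ * X = 1 → Xᵀ * Z = 0 →
        Qᵀ * Q = 1 → Qᵀ * Z = 0 → Qᵀ * X = 0 →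
        σmin ≤ (Qᵀ * C * Q).trace / (e - p)) ∧
      ∃ Q : Matrix (Fin (d + e)) (Fin (e - p)) ℝ,
        Qᵀ * Q = 1 ∧ Qᵀ * Z = 0 ∧ Qᵀ * Xh = 0 ∧
        (Qᵀ * C * Q).trace / (e - p) = σmin :=
  stmt17_general hpe Z U₂ hU2 hU2Z hcomplete C l W hlanti hW hW' hspec
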